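/- The elements Ř_i(ξ) = s_i + 1/ξ of ℂ[S_k] satisfy the parameter-dependent braid relation: Ř_i(ξ_{i+1} − ξ_{i+2}) Ř_{i+1}(ξ_i − ξ_{i+2}) Ř_i(ξ_i − ξ_{i+1}) = Ř_{i+1}(ξ_i − ξ_{i+1}) Ř_i(ξ_i − ξ_{i+2}) Ř_{i+1}(ξ_{i+1} − ξ_{i+2}) for all complex spectral parameters ξ_i, ξ_{i+1}, ξ_{i+2} with pairwise distinct values. -/

import Mathlib

/-- The Baxterized element `Ř_i(ξ) = s_i + 1/ξ` of the group algebra `ℂ[S_k]`, where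
`s_i` is the simple transposition exchanging the (0-indexed) positions `i` and `i+1`.
(Junk value `1` for out-of-range indices, which never occur below.) -/
noncomputable def Rh (k : ℕ) (i : ℕ) (ξ : ℂ) : MonoidAlgebra ℂ (Equiv.Perm (Fin k)) :=
  if h : i + 1 < k then
    MonoidAlgebra.single (Equiv.swap ⟨i, by omega⟩ ⟨i + 1, h⟩) 1 + ξ⁻¹ • 1
  else 1

/-!
Expanding with `S² = T² = 1` and `STS = TST`, the difference of the two sides of
`(S + x)(T + y)(S + z) = (T + z)(S + y)(T + x)` is `(y(x + z) - xz)(S - T)`. For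
`x = ξ⁻¹`, `y = (ξ + η)⁻¹`, `z = η⁻¹` the scalar factor vanishes, and the spectral parameters
of the theorem are additive in this way: `a - c = (b - c) + (a - b)`.
-/

section Baxterization

variable {A : Type*} [Ring A] {S T : A}

theorem add_smul_one_braid {R : Type*} [CommRing R] [Algebra R A]
    (hS : S * S = 1) (hT : T * T = 1) (hST : S * T * S = T * S * T)
    {x y z : R} (hxyz : y * (x + z) = x * z) :
    (S + x • 1) * (T + y • 1) * (S + z • 1) = (T + z • 1) * (S + y • 1) * (T + x • 1) := by
  simp only [mul_add, add_mul, smul_mul_assoc, mul_smul_comm, mul_one, one_mul, hS, hT, hST]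
  match_scalars <;> first | ring1 | linear_combination hxyz | linear_combination -hxyz

theorem add_inv_smul_one_braid {K : Type*} [Field K] [Algebra K A]
    (hS : S * S = 1) (hT : T * T = 1) (hST : S * T * S = T * S * T)
    {x z : K} (hx : x ≠ 0) (hz : z ≠ 0) (hxz : x + z ≠ 0) :
    (S + x⁻¹ • 1) * (T + (x + z)⁻¹ • 1) * (S + z⁻¹ • 1) =
      (T + z⁻¹ • 1) * (S + (x + z)⁻¹ • 1) * (T + x⁻¹ • 1) := by
  refine add_smul_one_braid hS hT hST ?_
  rw [inv_add_inv hx hz, div_eq_mul_inv, inv_mul_cancel_left₀ hxz, mul_inv]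

end Baxterization

theorem Equiv.swap_braid {α : Type*} [DecidableEq α] {u v w : α} (huv : u ≠ v) (huw : u ≠ w)
    (hvw : v ≠ w) : swap u v * swap v w * swap u v = swap v w * swap u v * swap v w := by
  rw [swap_comm u v, swap_comm v w, swap_mul_swap_mul_swap hvw.symm huw.symm, ← swap_comm u v,
    ← swap_comm v w, swap_mul_swap_mul_swap huv huw, swap_comm]

namespace MonoidAlgebra

variable {R α : Type*} [CommSemiring R] [DecidableEq α]

theorem of_swap_mul_self (u v : α) :
    of R _ (Equiv.swap u v) * of R _ (Equiv.swap u v) = 1 := by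
  rw [← map_mul, Equiv.swap_mul_self, map_one]

theorem of_swap_braid {u v w : α} (huv : u ≠ v) (huw : u ≠ w) (hvw : v ≠ w) :
    of R _ (Equiv.swap u v) * of R _ (Equiv.swap v w) * of R _ (Equiv.swap u v) =
      of R _ (Equiv.swap v w) * of R _ (Equiv.swap u v) * of R _ (Equiv.swap v w) := by
  simp only [← map_mul, Equiv.swap_braid huv huw hvw]

end MonoidAlgebra

theorem Rh_eq_of_lt {k i : ℕ} (h : i + 1 < k) (ξ : ℂ) :
    Rh k i ξ = MonoidAlgebra.of ℂ _ (Equiv.swap ⟨i, by omega⟩ ⟨i + 1, h⟩) + ξ⁻¹ • 1 := by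
  rw [Rh, dif_pos h, MonoidAlgebra.of_apply]

/-- The elements `Ř_i(ξ) = s_i + 1/ξ` of `ℂ[S_k]` satisfy the
parameter-dependent braid relation
`Ř_i(ξ_{i+1} − ξ_{i+2}) Ř_{i+1}(ξ_i − ξ_{i+2}) Ř_i(ξ_i − ξ_{i+1})
 = Ř_{i+1}(ξ_i − ξ_{i+1}) Ř_i(ξ_i − ξ_{i+2}) Ř_{i+1}(ξ_{i+1} − ξ_{i+2})`
for pairwise distinct spectral parameters. -/
theorem statement11 (k : ℕ) (i : ℕ) (hik : i + 2 < k)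
    (a b c : ℂ) (hab : a ≠ b) (hac : a ≠ c) (hbc : b ≠ c) :
    Rh k i (b - c) * Rh k (i + 1) (a - c) * Rh k i (a - b) =
      Rh k (i + 1) (a - b) * Rh k i (a - c) * Rh k (i + 1) (b - c) := by
  have hsum : b - c + (a - b) ≠ 0 := by rw [sub_add_sub_cancel']; exact sub_ne_zero.2 hac
  simp only [Rh_eq_of_lt (by omega : i + 1 < k), Rh_eq_of_lt (by omega : i + 1 + 1 < k),
    show a - c = b - c + (a - b) by ring]
  refine add_inv_smul_one_braid (MonoidAlgebra.of_swap_mul_self _ _)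
    (MonoidAlgebra.of_swap_mul_self _ _) (MonoidAlgebra.of_swap_braid ?_ ?_ ?_)
    (sub_ne_zero.2 hbc) (sub_ne_zero.2 hab) hsum <;>
  simp only [ne_eq, Fin.mk.injEq] <;> omega
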